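/- Two Brzeziński crossed products A ⊗_{R,σ} V and A ⊗_{R',σ'} V are equivalent (i.e. there is an algebra isomorphism φ : A ⊗_{R',σ'} V → A ⊗_{R,σ} V with φ(a ⊗ 1_V) = a ⊗ 1_V for all a ∈ A) if and only if there exist linear maps θ, γ : V → A ⊗ V satisfying: θ(1_V) = γ(1_V) = 1_A ⊗ 1_V; v_{<-1>} v_{<0>_{\{-1\}}} ⊗ v_{<0>_{\{0\}}} = 1_A ⊗ v; v_{\{-1\}} v_{\{0\}_{<-1>}} ⊗ v_{\{0\}_{<0>}} = 1_A ⊗ v; R' = (μ₂⊗id_V)∘(id_A⊗id_A⊗γ)∘(id_A⊗R)∘(θ⊗id_A); σ' = (μ⊗id_V)∘(id_A⊗γ)∘(μ₂⊗id_V)∘(id_A⊗id_A⊗σ)∘(id_A⊗R⊗id_V)∘(θ⊗θ); and (μ⊗id_V)∘(μ⊗σ')∘(id_A⊗γ⊗id_V)∘(R⊗id_V)∘(id_V⊗γ) = (μ⊗id_V)∘(id_A⊗γ)∘σ. -/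

import Mathlib

open TensorProduct LinearMap Coalgebra

noncomputable section

namespace Paper

universe u

variable (k : Type u) [Field k]

section AlgebraSide

variable (A : Type u) [Ring A] [Algebra k A]
variable (V : Type u) [AddCommGroup V] [Module k V]

/-- `a ⊗ (b ⊗ v) ↦ ab ⊗ v`. -/
def muls2 : A ⊗[k] (A ⊗[k] V) →ₗ[k] A ⊗[k] V :=
  rTensor V (mul' k A) ∘ₗ (TensorProduct.assoc k A A V).symm.toLinearMap

/-- `a ⊗ (b ⊗ (c ⊗ v)) ↦ abc ⊗ v`. -/
def muls3 : A ⊗[k] (A ⊗[k] (A ⊗[k] V)) →ₗ[k] A ⊗[k] V :=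
  muls2 k A V ∘ₗ lTensor A (muls2 k A V)

variable {A V}

/-- The multiplication of the Brzezinski crossed product `A ⊗_{R,σ} V`. -/
def brzMul (R : V ⊗[k] A →ₗ[k] A ⊗[k] V) (σ : V ⊗[k] V →ₗ[k] A ⊗[k] V) :
    (A ⊗[k] V) ⊗[k] (A ⊗[k] V) →ₗ[k] A ⊗[k] V :=
  muls2 k A V ∘ₗ
    lTensor A (muls2 k A V ∘ₗ lTensor A σ ∘ₗ (TensorProduct.assoc k A V V).toLinearMap
      ∘ₗ rTensor V R ∘ₗ (TensorProduct.assoc k V A V).symm.toLinearMap) ∘ₗ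
    (TensorProduct.assoc k A V (A ⊗[k] V)).toLinearMap

/-- The axioms (1.1)--(1.5) of a Brzezinski crossed product. -/
structure IsBrzezinski (e : V) (R : V ⊗[k] A →ₗ[k] A ⊗[k] V)
    (σ : V ⊗[k] V →ₗ[k] A ⊗[k] V) : Prop where
  unit_R_left : ∀ a : A, R (e ⊗ₜ a) = a ⊗ₜ e
  unit_R_right : ∀ v : V, R (v ⊗ₜ (1 : A)) = (1 : A) ⊗ₜ v
  unit_σ_left : ∀ v : V, σ (e ⊗ₜ v) = (1 : A) ⊗ₜ v
  unit_σ_right : ∀ v : V, σ (v ⊗ₜ e) = (1 : A) ⊗ₜ v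
  brz3 : R ∘ₗ lTensor V (mul' k A)
      = rTensor V (mul' k A) ∘ₗ (TensorProduct.assoc k A A V).symm.toLinearMap
        ∘ₗ lTensor A R ∘ₗ (TensorProduct.assoc k A V A).toLinearMap
        ∘ₗ rTensor A R ∘ₗ (TensorProduct.assoc k V A A).symm.toLinearMap
  brz4 : muls2 k A V ∘ₗ lTensor A σ ∘ₗ (TensorProduct.assoc k A V V).toLinearMap
        ∘ₗ rTensor V R ∘ₗ (TensorProduct.assoc k V A V).symm.toLinearMap ∘ₗ lTensor V σ
      = muls2 k A V ∘ₗ lTensor A σ ∘ₗ (TensorProduct.assoc k A V V).toLinearMap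
        ∘ₗ rTensor V σ ∘ₗ (TensorProduct.assoc k V V V).symm.toLinearMap
  brz5 : muls2 k A V ∘ₗ lTensor A σ ∘ₗ (TensorProduct.assoc k A V V).toLinearMap
        ∘ₗ rTensor V R ∘ₗ (TensorProduct.assoc k V A V).symm.toLinearMap ∘ₗ lTensor V R
      = muls2 k A V ∘ₗ lTensor A R ∘ₗ (TensorProduct.assoc k A V A).toLinearMap
        ∘ₗ rTensor A σ ∘ₗ (TensorProduct.assoc k V V A).symm.toLinearMap

/-- The twisted tensor product multiplication on `A ⊗ B`, for a "multiplication"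
`m` on the vector space `B`. -/
def ttMul {B : Type u} [AddCommGroup B] [Module k B]
    (R : B ⊗[k] A →ₗ[k] A ⊗[k] B) (m : B ⊗[k] B →ₗ[k] B) :
    (A ⊗[k] B) ⊗[k] (A ⊗[k] B) →ₗ[k] A ⊗[k] B :=
  muls2 k A B ∘ₗ
    lTensor A (lTensor A m ∘ₗ (TensorProduct.assoc k A B B).toLinearMap
      ∘ₗ rTensor B R ∘ₗ (TensorProduct.assoc k B A B).symm.toLinearMap) ∘ₗ
    (TensorProduct.assoc k A B (A ⊗[k] B)).toLinearMap

/-- The axioms of a twisting map `R : B ⊗ A → A ⊗ B`, where the algebra structure on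
the vector space `B` is given by the multiplication `m` with unit `e`. -/
structure IsTwisting {B : Type u} [AddCommGroup B] [Module k B]
    (R : B ⊗[k] A →ₗ[k] A ⊗[k] B) (m : B ⊗[k] B →ₗ[k] B) (e : B) : Prop where
  unit_left : ∀ a : A, R (e ⊗ₜ a) = a ⊗ₜ e
  unit_right : ∀ b : B, R (b ⊗ₜ (1 : A)) = (1 : A) ⊗ₜ b
  mul_A : R ∘ₗ lTensor B (mul' k A)
      = rTensor B (mul' k A) ∘ₗ (TensorProduct.assoc k A A B).symm.toLinearMap
        ∘ₗ lTensor A R ∘ₗ (TensorProduct.assoc k A B A).toLinearMap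
        ∘ₗ rTensor A R ∘ₗ (TensorProduct.assoc k B A A).symm.toLinearMap
  mul_B : R ∘ₗ rTensor A m
      = lTensor A m ∘ₗ (TensorProduct.assoc k A B B).toLinearMap
        ∘ₗ rTensor B R ∘ₗ (TensorProduct.assoc k B A B).symm.toLinearMap
        ∘ₗ lTensor B R ∘ₗ (TensorProduct.assoc k B B A).toLinearMap

/-- The deformed map `R'` of the invariance under twisting theorem (formula (Rprim)). -/
def Rtw (R : V ⊗[k] A →ₗ[k] A ⊗[k] V) (θ γ : V →ₗ[k] A ⊗[k] V) :
    V ⊗[k] A →ₗ[k] A ⊗[k] V :=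
  muls3 k A V ∘ₗ lTensor A (lTensor A γ) ∘ₗ lTensor A R
    ∘ₗ (TensorProduct.assoc k A V A).toLinearMap ∘ₗ rTensor A θ

/-- The deformed map `σ'` of the invariance under twisting theorem (formula (sigmaprim)). -/
def σtw (R : V ⊗[k] A →ₗ[k] A ⊗[k] V) (σ : V ⊗[k] V →ₗ[k] A ⊗[k] V)
    (θ γ : V →ₗ[k] A ⊗[k] V) : V ⊗[k] V →ₗ[k] A ⊗[k] V :=
  muls2 k A V ∘ₗ lTensor A γ ∘ₗ muls3 k A V ∘ₗ lTensor A (lTensor A σ)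
    ∘ₗ lTensor A ((TensorProduct.assoc k A V V).toLinearMap ∘ₗ rTensor V R
        ∘ₗ (TensorProduct.assoc k V A V).symm.toLinearMap)
    ∘ₗ (TensorProduct.assoc k A V (A ⊗[k] V)).toLinearMap ∘ₗ TensorProduct.map θ θ

/-- Condition (cros4), relative to a map `σ'`. -/
def Cros4 (R : V ⊗[k] A →ₗ[k] A ⊗[k] V) (σ : V ⊗[k] V →ₗ[k] A ⊗[k] V)
    (γ : V →ₗ[k] A ⊗[k] V) (σ' : V ⊗[k] V →ₗ[k] A ⊗[k] V) : Prop :=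
  muls2 k A V ∘ₗ TensorProduct.map (mul' k A) σ'
      ∘ₗ (TensorProduct.assoc k (A ⊗[k] A) V V).toLinearMap
      ∘ₗ rTensor V (TensorProduct.assoc k A A V).symm.toLinearMap
      ∘ₗ rTensor V (lTensor A γ) ∘ₗ rTensor V R
      ∘ₗ (TensorProduct.assoc k V A V).symm.toLinearMap ∘ₗ lTensor V γ
    = muls2 k A V ∘ₗ lTensor A γ ∘ₗ σ

/-- Conditions (cros1)--(cros3) on the pair `(θ, γ)`. -/
def Cros123 (e : V) (θ γ : V →ₗ[k] A ⊗[k] V) : Prop :=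
  θ e = (1 : A) ⊗ₜ e ∧ γ e = (1 : A) ⊗ₜ e ∧
  muls2 k A V ∘ₗ lTensor A γ ∘ₗ θ = TensorProduct.mk k A V 1 ∧
  muls2 k A V ∘ₗ lTensor A θ ∘ₗ γ = TensorProduct.mk k A V 1

/-- The map `φ(a ⊗ v) = a v_{<-1>} ⊗ v_{<0>}`. -/
def φtw (θ : V →ₗ[k] A ⊗[k] V) : A ⊗[k] V →ₗ[k] A ⊗[k] V :=
  muls2 k A V ∘ₗ lTensor A θ

end AlgebraSide

section CoalgebraSide

variable (C : Type u) [AddCommGroup C] [Module k C] [Coalgebra k C]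
variable (X : Type u) [AddCommGroup X] [Module k X]

variable {C X}

/-- The comultiplication of the crossed coproduct `X_{W,ρ} ⊗ C`. -/
def coDelta (W : X ⊗[k] C →ₗ[k] C ⊗[k] X) (ρ : X ⊗[k] C →ₗ[k] X ⊗[k] X) :
    X ⊗[k] C →ₗ[k] (X ⊗[k] C) ⊗[k] (X ⊗[k] C) :=
  (TensorProduct.assoc k X C (X ⊗[k] C)).symm.toLinearMap ∘ₗ
  lTensor X (TensorProduct.assoc k C X C).toLinearMap ∘ₗ
  lTensor X (rTensor C W) ∘ₗ
  lTensor X (TensorProduct.assoc k X C C).symm.toLinearMap ∘ₗ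
  (TensorProduct.assoc k X X (C ⊗[k] C)).toLinearMap ∘ₗ
  TensorProduct.map ρ comul ∘ₗ
  (TensorProduct.assoc k X C C).symm.toLinearMap ∘ₗ
  lTensor X comul

/-- The counit `ε_X ⊗ ε_C` of the crossed coproduct. -/
def coEps (εX : X →ₗ[k] k) : X ⊗[k] C →ₗ[k] k :=
  (TensorProduct.lid k k).toLinearMap ∘ₗ TensorProduct.map εX counit

/-- The axioms (cobrz1)--(cobrz5) of a crossed coproduct. -/
structure IsCoBrzezinski (εX : X →ₗ[k] k) (W : X ⊗[k] C →ₗ[k] C ⊗[k] X)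
    (ρ : X ⊗[k] C →ₗ[k] X ⊗[k] X) : Prop where
  counit_W_left : (TensorProduct.rid k C).toLinearMap ∘ₗ lTensor C εX ∘ₗ W
      = (TensorProduct.lid k C).toLinearMap ∘ₗ rTensor C εX
  counit_W_right : (TensorProduct.lid k X).toLinearMap ∘ₗ rTensor X counit ∘ₗ W
      = (TensorProduct.rid k X).toLinearMap ∘ₗ lTensor X counit
  counit_ρ_left : (TensorProduct.rid k X).toLinearMap ∘ₗ lTensor X εX ∘ₗ ρ
      = (TensorProduct.rid k X).toLinearMap ∘ₗ lTensor X counit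
  counit_ρ_right : (TensorProduct.lid k X).toLinearMap ∘ₗ rTensor X εX ∘ₗ ρ
      = (TensorProduct.rid k X).toLinearMap ∘ₗ lTensor X counit
  cobrz3 : rTensor X comul ∘ₗ W
      = (TensorProduct.assoc k C C X).symm.toLinearMap ∘ₗ lTensor C W
        ∘ₗ (TensorProduct.assoc k C X C).toLinearMap ∘ₗ rTensor C W
        ∘ₗ (TensorProduct.assoc k X C C).symm.toLinearMap ∘ₗ lTensor X comul
  cobrz4 : rTensor X ρ ∘ₗ (TensorProduct.assoc k X C X).symm.toLinearMap
        ∘ₗ lTensor X W ∘ₗ (TensorProduct.assoc k X X C).toLinearMap ∘ₗ rTensor C ρ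
        ∘ₗ (TensorProduct.assoc k X C C).symm.toLinearMap ∘ₗ lTensor X comul
      = (TensorProduct.assoc k X X X).symm.toLinearMap ∘ₗ lTensor X ρ
        ∘ₗ (TensorProduct.assoc k X X C).toLinearMap ∘ₗ rTensor C ρ
        ∘ₗ (TensorProduct.assoc k X C C).symm.toLinearMap ∘ₗ lTensor X comul
  cobrz5 : rTensor X W ∘ₗ (TensorProduct.assoc k X C X).symm.toLinearMap
        ∘ₗ lTensor X W ∘ₗ (TensorProduct.assoc k X X C).toLinearMap ∘ₗ rTensor C ρ
        ∘ₗ (TensorProduct.assoc k X C C).symm.toLinearMap ∘ₗ lTensor X comul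
      = (TensorProduct.assoc k C X X).symm.toLinearMap ∘ₗ lTensor C ρ
        ∘ₗ (TensorProduct.assoc k C X C).toLinearMap ∘ₗ rTensor C W
        ∘ₗ (TensorProduct.assoc k X C C).symm.toLinearMap ∘ₗ lTensor X comul

end CoalgebraSide

section BialgebraSide

variable (A : Type u) [Ring A] [Bialgebra k A]
variable (C : Type u) [AddCommGroup C] [Module k C] [Coalgebra k C]

/-- `W₀ : A ⊗ C → C ⊗ A`, the flip. -/
def W0 : A ⊗[k] C →ₗ[k] C ⊗[k] A := (TensorProduct.comm k A C).toLinearMap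

/-- `g₀ : A ⊗ C → A`, `a ⊗ c ↦ ε_C(c) a`. -/
def g0 : A ⊗[k] C →ₗ[k] A :=
  (TensorProduct.rid k A).toLinearMap ∘ₗ lTensor A counit

/-- `ρ₀ : A ⊗ C → A ⊗ A`, `a ⊗ c ↦ ε_C(c) Δ_A(a)`. -/
def ρ0 : A ⊗[k] C →ₗ[k] A ⊗[k] A := comul ∘ₗ g0 k A C

variable {A C}

/-- The property that a comultiplication `Δ` on `Y` is a morphism of algebras, where the
multiplication on `Y` is `m` and the one on `Y ⊗ Y` is componentwise (with the middle flip). -/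
def DeltaIsMulMap {Y : Type u} [AddCommGroup Y] [Module k Y]
    (m : Y ⊗[k] Y →ₗ[k] Y) (Δ : Y →ₗ[k] Y ⊗[k] Y) : Prop :=
  Δ ∘ₗ m = TensorProduct.map m m ∘ₗ (tensorTensorTensorComm k Y Y Y Y).toLinearMap
    ∘ₗ TensorProduct.map Δ Δ

/-- The property that a counit `ε` on `Y` is a morphism of algebras. -/
def EpsIsMulMap {Y : Type u} [AddCommGroup Y] [Module k Y]
    (m : Y ⊗[k] Y →ₗ[k] Y) (ε : Y →ₗ[k] k) : Prop :=
  ε ∘ₗ m = mul' k k ∘ₗ TensorProduct.map ε ε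

/-- `A_{W₀}^{ρ₀} ⋈_R^σ C` is a cross product bialgebra: the crossed product algebra
`A ⊗_{R,σ} C` together with the tensor product coalgebra structure on `A ⊗ C`
form a bialgebra. -/
structure IsCrossBialgebra0 (eC : C) (R : C ⊗[k] A →ₗ[k] A ⊗[k] C)
    (σ : C ⊗[k] C →ₗ[k] A ⊗[k] C) : Prop where
  brz : IsBrzezinski k eC R σ
  delta_mul : DeltaIsMulMap k (brzMul k R σ) (Coalgebra.comul (R := k) (A := A ⊗[k] C))
  delta_one : Coalgebra.comul (R := k) (A := A ⊗[k] C) ((1 : A) ⊗ₜ eC)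
      = ((1 : A) ⊗ₜ eC) ⊗ₜ[k] ((1 : A) ⊗ₜ eC)
  eps_mul : EpsIsMulMap k (brzMul k R σ) (Coalgebra.counit (R := k) (A := A ⊗[k] C))
  eps_one : Coalgebra.counit (R := k) (A := A ⊗[k] C) ((1 : A) ⊗ₜ eC) = 1

/-- `A_{W}^{ρ} ⋈_R^σ C` is a cross product bialgebra: the crossed product algebra
`A ⊗_{R,σ} C` together with the crossed coproduct coalgebra `A_{W,ρ} ⊗ C`
form a bialgebra. -/
structure IsCrossBialgebra (eC : C) (R : C ⊗[k] A →ₗ[k] A ⊗[k] C)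
    (σ : C ⊗[k] C →ₗ[k] A ⊗[k] C) (W : A ⊗[k] C →ₗ[k] C ⊗[k] A)
    (ρ : A ⊗[k] C →ₗ[k] A ⊗[k] A) : Prop where
  brz : IsBrzezinski k eC R σ
  cobrz : IsCoBrzezinski k (Coalgebra.counit (R := k) (A := A)) W ρ
  delta_mul : DeltaIsMulMap k (brzMul k R σ) (coDelta k W ρ)
  delta_one : coDelta k W ρ ((1 : A) ⊗ₜ eC) = ((1 : A) ⊗ₜ eC) ⊗ₜ[k] ((1 : A) ⊗ₜ eC)
  eps_mul : EpsIsMulMap k (brzMul k R σ) (coEps k (Coalgebra.counit (R := k) (A := A)))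
  eps_one : coEps k (Coalgebra.counit (R := k) (A := A)) ((1 : A) ⊗ₜ eC) = 1

/-- The right `C`-coaction `a ⊗ c ↦ (a ⊗ c₁) ⊗ c₂` on `A ⊗ C`. -/
def coactC : A ⊗[k] C →ₗ[k] (A ⊗[k] C) ⊗[k] C :=
  (TensorProduct.assoc k A C C).symm.toLinearMap ∘ₗ lTensor A comul

/-- The counit condition (extra1) for a map `θ : C → A ⊗ C`. -/
def CounitCond (θ : C →ₗ[k] A ⊗[k] C) : Prop :=
  (TensorProduct.lid k k).toLinearMap
      ∘ₗ TensorProduct.map (Coalgebra.counit (R := k) (A := A)) counit ∘ₗ θ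
    = (counit : C →ₗ[k] k)

/-- The right `C`-comodule condition (extra2)/(extra3) for a map `θ : C → A ⊗ C`. -/
def ComodCond (θ : C →ₗ[k] A ⊗[k] C) : Prop :=
  lTensor A comul ∘ₗ θ
    = (TensorProduct.assoc k A C C).toLinearMap ∘ₗ rTensor C θ ∘ₗ comul

/-- The map `c ↦ ε_A(c_{<-1>}) c_{<0>}`. -/
def epsFirst (θ : C →ₗ[k] A ⊗[k] C) : C →ₗ[k] C :=
  (TensorProduct.lid k C).toLinearMap
    ∘ₗ rTensor C (Coalgebra.counit (R := k) (A := A)) ∘ₗ θ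

/-- The map `W'` built from `(θ, γ)`; `h` is applied to the first output factor
(`h = id` for formula (Wprimnou), `h = epsFirst γ` for formula (Wprim)). -/
def Wtw (θ γ : C →ₗ[k] A ⊗[k] C) (h : C →ₗ[k] C) : A ⊗[k] C →ₗ[k] C ⊗[k] A :=
  lTensor C (mul' k A) ∘ₗ (TensorProduct.assoc k C A A).toLinearMap
    ∘ₗ rTensor A (TensorProduct.comm k A C).toLinearMap
    ∘ₗ (TensorProduct.assoc k A C A).symm.toLinearMap
    ∘ₗ rTensor (C ⊗[k] A) (mul' k A)
    ∘ₗ (TensorProduct.assoc k A A (C ⊗[k] A)).symm.toLinearMap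
    ∘ₗ lTensor A (lTensor A (TensorProduct.map h (g0 k A C ∘ₗ γ) ∘ₗ comul) ∘ₗ θ)

/-- Componentwise multiplication `(A ⊗ A) ⊗ (A ⊗ A) → A ⊗ A` (with the middle flip). -/
def mulPair : (A ⊗[k] A) ⊗[k] (A ⊗[k] A) →ₗ[k] A ⊗[k] A :=
  TensorProduct.map (mul' k A) (mul' k A) ∘ₗ (tensorTensorTensorComm k A A A A).toLinearMap

/-- The map `c ↦ c_{{-1}} ⊗ ε_C(c_{{0}}_{{0}}) c_{{0}}_{{-1}}`. -/
def lamAux (γ : C →ₗ[k] A ⊗[k] C) : C →ₗ[k] A ⊗[k] A :=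
  lTensor A (g0 k A C ∘ₗ γ) ∘ₗ γ

/-- The map `κ` appearing in the formula (rhoprim). -/
def kapAux (θ γ : C →ₗ[k] A ⊗[k] C) : C →ₗ[k] A ⊗[k] A :=
  mulPair k ∘ₗ TensorProduct.map comul (lamAux k γ) ∘ₗ θ

/-- The map `ρ'` of formula (rhoprim). -/
def ρtw (θ γ : C →ₗ[k] A ⊗[k] C) : A ⊗[k] C →ₗ[k] A ⊗[k] A :=
  mulPair k ∘ₗ TensorProduct.map comul (kapAux k θ γ)

/-- Auxiliary map for the explicit formula (deltaprim). -/
def eAux (θ γ : C →ₗ[k] A ⊗[k] C) : C →ₗ[k] (A ⊗[k] C) ⊗[k] A :=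
  (TensorProduct.assoc k A C A).symm.toLinearMap
    ∘ₗ lTensor A (TensorProduct.comm k A C).toLinearMap
    ∘ₗ TensorProduct.map (mul' k A) LinearMap.id
    ∘ₗ (tensorTensorTensorComm k A A A C).toLinearMap
    ∘ₗ TensorProduct.map comul γ ∘ₗ θ

/-- Auxiliary map for the explicit formula (deltaprim). -/
def dAux (θ γ : C →ₗ[k] A ⊗[k] C) : C →ₗ[k] (A ⊗[k] C) ⊗[k] (A ⊗[k] C) :=
  lTensor (A ⊗[k] C) (muls2 k A C)
    ∘ₗ (TensorProduct.assoc k (A ⊗[k] C) A (A ⊗[k] C)).toLinearMap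
    ∘ₗ TensorProduct.map (eAux k θ γ) γ ∘ₗ comul

/-- The explicit formula (deltaprim) for the comultiplication `Δ'`. -/
def deltaExplicit (θ γ : C →ₗ[k] A ⊗[k] C) :
    A ⊗[k] C →ₗ[k] (A ⊗[k] C) ⊗[k] (A ⊗[k] C) :=
  TensorProduct.map (muls2 k A C) (muls2 k A C)
    ∘ₗ (tensorTensorTensorComm k A A (A ⊗[k] C) (A ⊗[k] C)).toLinearMap
    ∘ₗ TensorProduct.map comul (dAux k θ γ)

/-- The conditions (cros1)--(cros4) and (extra1)--(extra3) on `(θ, γ)`. -/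
def TwistConditions (eC : C) (R : C ⊗[k] A →ₗ[k] A ⊗[k] C)
    (σ : C ⊗[k] C →ₗ[k] A ⊗[k] C) (θ γ : C →ₗ[k] A ⊗[k] C) : Prop :=
  Cros123 k eC θ γ ∧ Cros4 k R σ γ (σtw k R σ θ γ) ∧
  CounitCond k θ ∧ CounitCond k γ ∧ ComodCond k θ ∧ ComodCond k γ

/-- Equivalence of cross product bialgebras: a linear isomorphism which is a morphism of
bialgebras, of left `A`-modules and of right `C`-comodules; the target is the cross product
bialgebra `A_{W₀}^{ρ₀} ⋈_R^σ C` (with tensor product coalgebra structure), the source is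
`A_{W'}^{ρ'} ⋈_{R'}^{σ'} C`. -/
def CrossEquiv (eC : C) (R : C ⊗[k] A →ₗ[k] A ⊗[k] C) (σ : C ⊗[k] C →ₗ[k] A ⊗[k] C)
    (R' : C ⊗[k] A →ₗ[k] A ⊗[k] C) (σ' : C ⊗[k] C →ₗ[k] A ⊗[k] C)
    (W' : A ⊗[k] C →ₗ[k] C ⊗[k] A) (ρ' : A ⊗[k] C →ₗ[k] A ⊗[k] A) : Prop :=
  ∃ φ : (A ⊗[k] C) ≃ₗ[k] A ⊗[k] C,
    (∀ x y : A ⊗[k] C, φ (brzMul k R' σ' (x ⊗ₜ y)) = brzMul k R σ (φ x ⊗ₜ φ y)) ∧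
    φ ((1 : A) ⊗ₜ eC) = (1 : A) ⊗ₜ eC ∧
    TensorProduct.map φ.toLinearMap φ.toLinearMap ∘ₗ coDelta k W' ρ'
      = Coalgebra.comul (R := k) (A := A ⊗[k] C) ∘ₗ φ.toLinearMap ∧
    Coalgebra.counit (R := k) (A := A ⊗[k] C) ∘ₗ φ.toLinearMap
      = coEps k (Coalgebra.counit (R := k) (A := A)) ∧
    (∀ (a : A) (x : A ⊗[k] C), φ (muls2 k A C (a ⊗ₜ x)) = muls2 k A C (a ⊗ₜ φ x)) ∧
    rTensor C φ.toLinearMap ∘ₗ coactC k = coactC k ∘ₗ φ.toLinearMap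

end BialgebraSide


section Drinfeld

variable (H : Type u) [Ring H] [HopfAlgebra k H]

/-- Convolution product on `H* = Dual k H`: `(p * q)(h) = p(h₁) q(h₂)`. -/
def conv : Module.Dual k H ⊗[k] Module.Dual k H →ₗ[k] Module.Dual k H :=
  (Coalgebra.comul (R := k) (A := H)).dualMap ∘ₗ TensorProduct.dualDistrib k H H

/-- The left regular action `h ⊗ p ↦ h ⇀ p`, `(h ⇀ p)(h') = p(h'h)`. -/
def lact : H ⊗[k] Module.Dual k H →ₗ[k] Module.Dual k H :=
  TensorProduct.lift ((lcomp k (Module.Dual k H) ((LinearMap.mul k H).flip)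
    ∘ₗ llcomp k H H k).flip)

/-- The right regular action `p ⊗ h ↦ p ↼ h`, `(p ↼ h)(h') = p(hh')`. -/
def ract : Module.Dual k H ⊗[k] H →ₗ[k] Module.Dual k H :=
  TensorProduct.lift (lcomp k (Module.Dual k H) (LinearMap.mul k H)
    ∘ₗ llcomp k H H k)

/-- The map `h ⊗ p ↦ (h₁ ⇀ p ↼ S⁻¹(h₃)) ⊗ h₂`, where `Sinv` plays the role of `S⁻¹`. -/
def dPhi (Sinv : H →ₗ[k] H) :
    H ⊗[k] Module.Dual k H →ₗ[k] Module.Dual k H ⊗[k] H :=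
  rTensor H (lact k H)
    ∘ₗ (TensorProduct.assoc k H (Module.Dual k H) H).symm.toLinearMap
    ∘ₗ lTensor H (TensorProduct.comm k H (Module.Dual k H)).toLinearMap
    ∘ₗ lTensor H (lTensor H (ract k H
        ∘ₗ (TensorProduct.comm k H (Module.Dual k H)).toLinearMap
        ∘ₗ rTensor (Module.Dual k H) Sinv))
    ∘ₗ lTensor H (TensorProduct.assoc k H H (Module.Dual k H)).toLinearMap
    ∘ₗ (TensorProduct.assoc k H (H ⊗[k] H) (Module.Dual k H)).toLinearMap
    ∘ₗ rTensor (Module.Dual k H) (lTensor H comul ∘ₗ comul)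

/-- The multiplication of the Drinfeld double:
`(p ⊗ h)(p' ⊗ h') = p (h₁ ⇀ p' ↼ S⁻¹(h₃)) ⊗ h₂ h'`. -/
def dMul (Sinv : H →ₗ[k] H) :
    (Module.Dual k H ⊗[k] H) ⊗[k] (Module.Dual k H ⊗[k] H) →ₗ[k]
      Module.Dual k H ⊗[k] H :=
  rTensor H (conv k H)
    ∘ₗ (TensorProduct.assoc k (Module.Dual k H) (Module.Dual k H) H).symm.toLinearMap
    ∘ₗ lTensor (Module.Dual k H)
        (lTensor (Module.Dual k H) (mul' k H)
          ∘ₗ (TensorProduct.assoc k (Module.Dual k H) H H).toLinearMap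
          ∘ₗ rTensor H (dPhi k H Sinv)
          ∘ₗ (TensorProduct.assoc k H (Module.Dual k H) H).symm.toLinearMap)
    ∘ₗ (TensorProduct.assoc k (Module.Dual k H) H
          (Module.Dual k H ⊗[k] H)).toLinearMap

/-- The comultiplication of `H*`, dual to the multiplication of `H` (finite dimensional). -/
def comulD [FiniteDimensional k H] :
    Module.Dual k H →ₗ[k] Module.Dual k H ⊗[k] Module.Dual k H :=
  (TensorProduct.dualDistribEquiv k H H).symm.toLinearMap ∘ₗ (mul' k H).dualMap

/-- The comultiplication of `H^{*cop}`. -/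
def comulDcop [FiniteDimensional k H] :
    Module.Dual k H →ₗ[k] Module.Dual k H ⊗[k] Module.Dual k H :=
  (TensorProduct.comm k (Module.Dual k H) (Module.Dual k H)).toLinearMap ∘ₗ comulD k H

/-- The counit of `H*`: evaluation at `1`. -/
def counitD : Module.Dual k H →ₗ[k] k := Module.Dual.eval k H 1

/-- The comultiplication of the tensor product coalgebra `H^{*cop} ⊗ H`. -/
def deltaD [FiniteDimensional k H] :
    Module.Dual k H ⊗[k] H →ₗ[k]
      (Module.Dual k H ⊗[k] H) ⊗[k] (Module.Dual k H ⊗[k] H) :=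
  (tensorTensorTensorComm k (Module.Dual k H) (Module.Dual k H) H H).toLinearMap
    ∘ₗ TensorProduct.map (comulDcop k H) comul

/-- The counit of the tensor product coalgebra `H^{*cop} ⊗ H`. -/
def epsD : Module.Dual k H ⊗[k] H →ₗ[k] k :=
  (TensorProduct.lid k k).toLinearMap
    ∘ₗ TensorProduct.map (counitD k H) (Coalgebra.counit (R := k) (A := H))

/-- The left `H^{*cop}`-coaction on `H^{*cop} ⊗ H`: `p ⊗ h ↦ p₂ ⊗ (p₁ ⊗ h)`. -/
def coactD [FiniteDimensional k H] :
    Module.Dual k H ⊗[k] H →ₗ[k]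
      Module.Dual k H ⊗[k] (Module.Dual k H ⊗[k] H) :=
  (TensorProduct.assoc k (Module.Dual k H) (Module.Dual k H) H).toLinearMap
    ∘ₗ rTensor H (comulDcop k H)

/-- `r₁₂ ∈ H ⊗ (H ⊗ H)` for `r ∈ H ⊗ H`. -/
def r12 (r : H ⊗[k] H) : H ⊗[k] (H ⊗[k] H) :=
  lTensor H ((TensorProduct.mk k H H).flip 1) r

/-- `r₁₃ ∈ H ⊗ (H ⊗ H)` for `r ∈ H ⊗ H`. -/
def r13 (r : H ⊗[k] H) : H ⊗[k] (H ⊗[k] H) :=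
  lTensor H (TensorProduct.mk k H H 1) r

/-- `r₂₃ ∈ H ⊗ (H ⊗ H)` for `r ∈ H ⊗ H`. -/
def r23 (r : H ⊗[k] H) : H ⊗[k] (H ⊗[k] H) := (1 : H) ⊗ₜ r

/-- `r` is a quasitriangular structure on `H`. -/
structure IsQuasitriangular (r : H ⊗[k] H) : Prop where
  qt1 : (TensorProduct.assoc k H H H) (rTensor H comul r) = r13 k H r * r23 k H r
  qt2 : lTensor H comul r = r13 k H r * r12 k H r
  qt3 : ∀ h : H, (TensorProduct.comm k H H) (comul h) * r = r * comul h
  qt4l : (TensorProduct.lid k H)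
      (rTensor H (Coalgebra.counit (R := k) (A := H)) r) = 1
  qt4r : (TensorProduct.rid k H)
      (lTensor H (Coalgebra.counit (R := k) (A := H)) r) = 1

/-- Majid's map `φ(p ⊗ h) = (p ↼ S⁻¹(r¹)) ⊗ r² h`. -/
def phiMajid (r : H ⊗[k] H) (Sinv : H →ₗ[k] H) :
    Module.Dual k H ⊗[k] H →ₗ[k] Module.Dual k H ⊗[k] H :=
  TensorProduct.map (ract k H ∘ₗ lTensor (Module.Dual k H) Sinv)
      (mul' k H ∘ₗ (TensorProduct.comm k H H).toLinearMap)
    ∘ₗ (tensorTensorTensorComm k (Module.Dual k H) H H H).toLinearMap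
    ∘ₗ (TensorProduct.mk k (Module.Dual k H ⊗[k] H) (H ⊗[k] H)).flip r

end Drinfeld

end Paper

universe u
open Paper

/-!
An equivalence `φ` fixing `A ⊗ 1` is left `A`-linear, since `a • x = (a ⊗ 1) x` in both crossed
products; so `φ` is determined by `θ v = φ (1 ⊗ v)` and `φ⁻¹` by `γ v = φ⁻¹ (1 ⊗ v)`, and
(cros1)–(cros3) say that these two maps are mutually inverse and fix `1 ⊗ 1`. In a crossed product
`R (v ⊗ a) = (1 ⊗ v)(a ⊗ 1)` and `σ (v ⊗ w) = (1 ⊗ v)(1 ⊗ w)`, so multiplicativity of `φ` forces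
`R' (v ⊗ a) = φ⁻¹ (θ v · (a ⊗ 1))` and `σ' (v ⊗ w) = φ⁻¹ (θ v · θ w)`, which are (Rprim) and
(sigmaprim). Conversely, for these `R'` and `σ'` the map `φ` is multiplicative: the only instance
of associativity of `A ⊗_{R,σ} V` this needs is `(x (b ⊗ 1)) y = x (b y)`, a consequence of (1.3).
Condition (cros4) is the multiplicativity of `φ⁻¹` on `(1 ⊗ v)(1 ⊗ w)` and holds automatically.
-/

namespace Paper

variable {k A V : Type u} [Field k] [Ring A] [Algebra k A] [AddCommGroup V] [Module k V]

local notation:70 x:70 " ⋆[" R ", " σ "] " y:71 => brzMul _ R σ (x ⊗ₜ y)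

section LeftAction

theorem smul_induction_on {P : A ⊗[k] V → Prop} (x : A ⊗[k] V)
    (one_tmul : ∀ v : V, P (1 ⊗ₜ v)) (smul : ∀ (a : A) x, P x → P (a • x))
    (add : ∀ x y, P x → P y → P (x + y)) : P x := by
  induction x using TensorProduct.induction_on with
  | zero => simpa using smul 0 _ (one_tmul 0)
  | tmul a v => simpa [smul_tmul'] using smul a _ (one_tmul v)
  | add x y hx hy => exact add x y hx hy

theorem muls2_tmul (a : A) (x : A ⊗[k] V) : muls2 k A V (a ⊗ₜ x) = a • x := by
  induction x using TensorProduct.induction_on with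
  | zero => simp
  | tmul b v => simp [muls2, smul_tmul']
  | add x y hx hy => simp_all [tmul_add]

def smulExtend {X : Type*} [AddCommGroup X] [Module k X] (f : V ⊗[k] X →ₗ[k] A ⊗[k] V) :
    (A ⊗[k] V) ⊗[k] X →ₗ[k] A ⊗[k] V :=
  muls2 k A V ∘ₗ lTensor A f ∘ₗ (TensorProduct.assoc k A V X).toLinearMap

variable {X : Type*} [AddCommGroup X] [Module k X] (f : V ⊗[k] X →ₗ[k] A ⊗[k] V)

@[simp]
theorem smulExtend_tmul (a : A) (v : V) (t : X) :
    smulExtend f ((a ⊗ₜ v) ⊗ₜ t) = a • f (v ⊗ₜ t) := by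
  simp [smulExtend, muls2_tmul]

theorem smulExtend_smul (a : A) (z : A ⊗[k] V) (t : X) :
    smulExtend f ((a • z) ⊗ₜ t) = a • smulExtend f (z ⊗ₜ t) := by
  induction z using TensorProduct.induction_on with
  | zero => simp
  | tmul b v => simp [smul_tmul', mul_smul]
  | add z z' hz hz' => simp_all [add_tmul]

variable (θ γ : V →ₗ[k] A ⊗[k] V)

@[simp]
theorem φtw_tmul (a : A) (v : V) : φtw k θ (a ⊗ₜ v) = a • θ v := by
  simp [φtw, muls2_tmul]

theorem φtw_smul (a : A) (x : A ⊗[k] V) : φtw k θ (a • x) = a • φtw k θ x := by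
  induction x using TensorProduct.induction_on with
  | zero => simp
  | tmul b v => simp [smul_tmul', mul_smul]
  | add x y hx hy => simp_all

theorem φtw_eq_of_map_smul (g : A ⊗[k] V →ₗ[k] A ⊗[k] V)
    (hg : ∀ (a : A) x, g (a • x) = a • g x) (x : A ⊗[k] V) :
    φtw k (g ∘ₗ TensorProduct.mk k A V 1) x = g x := by
  induction x using smul_induction_on with
  | one_tmul v => simp
  | smul a x hx => rw [φtw_smul, hx, hg]
  | add x y hx hy => simp [hx, hy]

theorem φtw_φtw (hθγ : ∀ v, φtw k θ (γ v) = 1 ⊗ₜ v) (x : A ⊗[k] V) :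
    φtw k θ (φtw k γ x) = x := by
  induction x using smul_induction_on with
  | one_tmul v => simp [hθγ]
  | smul a x hx => rw [φtw_smul, φtw_smul, hx]
  | add x y hx hy => simp [hx, hy]

end LeftAction

section CrossedProduct

variable (R : V ⊗[k] A →ₗ[k] A ⊗[k] V) (σ : V ⊗[k] V →ₗ[k] A ⊗[k] V)

theorem brzMul_eq_smulExtend :
    brzMul k R σ = smulExtend (smulExtend σ ∘ₗ rTensor V R
      ∘ₗ (TensorProduct.assoc k V A V).symm.toLinearMap) := rfl

theorem one_tmul_brzMul_tmul (v : V) (b : A) (w : V) :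
    ((1 : A) ⊗ₜ v) ⋆[R, σ] (b ⊗ₜ w) = smulExtend σ (R (v ⊗ₜ b) ⊗ₜ w) := by
  simp [brzMul_eq_smulExtend]

theorem brzMul_smul_left (a : A) (x y : A ⊗[k] V) :
    (a • x) ⋆[R, σ] y = a • (x ⋆[R, σ] y) := by
  rw [brzMul_eq_smulExtend, smulExtend_smul]

theorem brzMul_assoc_of_one_tmul {y z : A ⊗[k] V}
    (H : ∀ v : V, (((1 : A) ⊗ₜ v) ⋆[R, σ] y) ⋆[R, σ] z = ((1 : A) ⊗ₜ v) ⋆[R, σ] (y ⋆[R, σ] z))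
    (x : A ⊗[k] V) : (x ⋆[R, σ] y) ⋆[R, σ] z = x ⋆[R, σ] (y ⋆[R, σ] z) := by
  induction x using smul_induction_on with
  | one_tmul v => exact H v
  | smul a x hx => simp only [brzMul_smul_left, hx]
  | add x x' hx hx' => simp only [add_tmul, map_add, hx, hx']

end CrossedProduct

namespace IsBrzezinski

variable {e : V} {R : V ⊗[k] A →ₗ[k] A ⊗[k] V} {σ : V ⊗[k] V →ₗ[k] A ⊗[k] V}
  (h : IsBrzezinski k e R σ)
include h

theorem one_tmul_brzMul_one_tmul (v w : V) :
    ((1 : A) ⊗ₜ v) ⋆[R, σ] ((1 : A) ⊗ₜ w) = σ (v ⊗ₜ w) := by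
  simp [one_tmul_brzMul_tmul, h.unit_R_right]

theorem tmul_e_brzMul (a : A) (y : A ⊗[k] V) : (a ⊗ₜ e) ⋆[R, σ] y = a • y := by
  have hone : ((1 : A) ⊗ₜ e) ⋆[R, σ] y = y := by
    induction y using TensorProduct.induction_on with
    | zero => simp
    | tmul b w =>
      rw [one_tmul_brzMul_tmul, h.unit_R_left, smulExtend_tmul, h.unit_σ_left, smul_tmul',
        smul_eq_mul, mul_one]
    | add y y' hy hy' => simp only [tmul_add, map_add, hy, hy']
  rw [show a ⊗ₜ[k] e = a • ((1 : A) ⊗ₜ[k] e) by rw [smul_tmul', smul_eq_mul, mul_one],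
    brzMul_smul_left, hone]

theorem brzMul_one_tmul_e (z : A ⊗[k] V) : z ⋆[R, σ] ((1 : A) ⊗ₜ e) = z := by
  induction z using smul_induction_on with
  | one_tmul v => rw [h.one_tmul_brzMul_one_tmul, h.unit_σ_right]
  | smul a z hz => rw [brzMul_smul_left, hz]
  | add z z' hz hz' => simp [add_tmul, hz, hz']

theorem smulExtend_eq_brzMul_one_tmul (z : A ⊗[k] V) (w : V) :
    smulExtend σ (z ⊗ₜ w) = z ⋆[R, σ] ((1 : A) ⊗ₜ w) := by
  induction z using smul_induction_on with
  | one_tmul v => rw [h.one_tmul_brzMul_one_tmul, smulExtend_tmul, one_smul]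
  | smul a z hz => rw [smulExtend_smul, brzMul_smul_left, hz]
  | add z z' hz hz' => simp [add_tmul, hz, hz']

theorem one_tmul_brzMul_tmul_e (v : V) (a : A) :
    ((1 : A) ⊗ₜ v) ⋆[R, σ] (a ⊗ₜ e) = R (v ⊗ₜ a) := by
  rw [one_tmul_brzMul_tmul, h.smulExtend_eq_brzMul_one_tmul, h.brzMul_one_tmul_e]

theorem smulExtend_eq_brzMul_tmul_e (z : A ⊗[k] V) (a : A) :
    smulExtend R (z ⊗ₜ a) = z ⋆[R, σ] (a ⊗ₜ e) := by
  induction z using smul_induction_on with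
  | one_tmul v => rw [h.one_tmul_brzMul_tmul_e, smulExtend_tmul, one_smul]
  | smul a z hz => rw [smulExtend_smul, brzMul_smul_left, hz]
  | add z z' hz hz' => simp [add_tmul, hz, hz']

theorem brzMul_tmul (x : A ⊗[k] V) (b : A) (w : V) :
    x ⋆[R, σ] (b ⊗ₜ w) = (x ⋆[R, σ] (b ⊗ₜ e)) ⋆[R, σ] ((1 : A) ⊗ₜ w) := by
  induction x using smul_induction_on with
  | one_tmul v =>
    rw [one_tmul_brzMul_tmul, h.one_tmul_brzMul_tmul_e, h.smulExtend_eq_brzMul_one_tmul]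
  | smul a x hx => rw [brzMul_smul_left, brzMul_smul_left, brzMul_smul_left, hx]
  | add x x' hx hx' => simp [add_tmul, hx, hx']

theorem R_brzMul_tmul_e (v : V) (b c : A) :
    R (v ⊗ₜ b) ⋆[R, σ] (c ⊗ₜ e) = R (v ⊗ₜ (b * c)) := by
  have := LinearMap.congr_fun h.brz3 (v ⊗ₜ (b ⊗ₜ c))
  simp only [coe_comp, Function.comp_apply, lTensor_tmul, mul'_apply] at this
  rw [this, ← h.smulExtend_eq_brzMul_tmul_e]
  rfl

theorem brzMul_tmul_e_tmul_e (x : A ⊗[k] V) (b c : A) :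
    (x ⋆[R, σ] (b ⊗ₜ e)) ⋆[R, σ] (c ⊗ₜ e) = x ⋆[R, σ] ((b * c) ⊗ₜ e) := by
  refine (brzMul_assoc_of_one_tmul R σ (fun v => ?_) x).trans ?_
  · rw [h.one_tmul_brzMul_tmul_e, R_brzMul_tmul_e h, tmul_e_brzMul h, smul_tmul', smul_eq_mul,
      h.one_tmul_brzMul_tmul_e]
  · rw [tmul_e_brzMul h, smul_tmul', smul_eq_mul]

theorem brzMul_tmul_e_brzMul (x : A ⊗[k] V) (b : A) (y : A ⊗[k] V) :
    (x ⋆[R, σ] (b ⊗ₜ e)) ⋆[R, σ] y = x ⋆[R, σ] (b • y) := by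
  induction y using TensorProduct.induction_on with
  | zero => simp
  | add y y' hy hy' => simp only [tmul_add, map_add, smul_add, hy, hy']
  | tmul c u =>
    rw [smul_tmul', smul_eq_mul, h.brzMul_tmul x (b * c) u, h.brzMul_tmul _ c u,
      h.brzMul_tmul_e_tmul_e]

end IsBrzezinski

section Twisting

variable (R : V ⊗[k] A →ₗ[k] A ⊗[k] V) (σ : V ⊗[k] V →ₗ[k] A ⊗[k] V)
  (θ γ : V →ₗ[k] A ⊗[k] V)

theorem Rtw_tmul (v : V) (a : A) :
    Rtw k R θ γ (v ⊗ₜ a) = φtw k γ (smulExtend R (θ v ⊗ₜ a)) := by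
  simp only [Rtw, coe_comp, Function.comp_apply, rTensor_tmul, LinearEquiv.coe_coe]
  induction θ v using TensorProduct.induction_on with
  | zero => simp
  | tmul c u =>
    rw [smulExtend_tmul, φtw_smul]
    simp [muls3, muls2_tmul, φtw]
  | add y y' hy hy' => simp only [add_tmul, map_add, hy, hy']

theorem σtw_tmul (v w : V) :
    σtw k R σ θ γ (v ⊗ₜ w) = φtw k γ (θ v ⋆[R, σ] θ w) := by
  have : σtw k R σ θ γ = φtw k γ ∘ₗ brzMul k R σ ∘ₗ TensorProduct.map θ θ := by
    simp only [σtw, brzMul, muls3, φtw, lTensor_comp, comp_assoc]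
  rw [this]
  rfl

theorem smulExtend_σtw (t : A ⊗[k] V) (w : V) :
    smulExtend (σtw k R σ θ γ) (t ⊗ₜ w) = φtw k γ (φtw k θ t ⋆[R, σ] θ w) := by
  induction t using TensorProduct.induction_on with
  | zero => simp
  | tmul d y => rw [smulExtend_tmul, σtw_tmul, φtw_tmul, brzMul_smul_left, φtw_smul]
  | add t t' ht ht' => simp only [add_tmul, map_add, ht, ht']

theorem smulExtend_φtw_tmul (σ' : V ⊗[k] V →ₗ[k] A ⊗[k] V) (z : A ⊗[k] V) (x : V) :
    smulExtend σ' (φtw k γ z ⊗ₜ x)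
      = muls2 k A V (TensorProduct.map (mul' k A) σ'
          (TensorProduct.assoc k (A ⊗[k] A) V V
            (rTensor V (TensorProduct.assoc k A A V).symm.toLinearMap
              (rTensor V (lTensor A γ) (z ⊗ₜ x))))) := by
  induction z using TensorProduct.induction_on with
  | zero => simp
  | tmul c u =>
    simp only [rTensor_tmul, lTensor_tmul, φtw_tmul, smulExtend_smul]
    induction γ u using TensorProduct.induction_on with
    | zero => simp
    | tmul d y => simp [muls2_tmul, mul_smul]
    | add t t' ht ht' => simp only [tmul_add, add_tmul, smul_add, map_add, ht, ht']
  | add z z' hz hz' => simp only [add_tmul, map_add, hz, hz']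

end Twisting

namespace IsBrzezinski

variable {e : V} {R : V ⊗[k] A →ₗ[k] A ⊗[k] V} {σ : V ⊗[k] V →ₗ[k] A ⊗[k] V}
  {θ γ : V →ₗ[k] A ⊗[k] V} (h : IsBrzezinski k e R σ) (hθγ : ∀ v, φtw k θ (γ v) = 1 ⊗ₜ v)
include h hθγ

theorem φtw_Rtw (v : V) (a : A) : φtw k θ (Rtw k R θ γ (v ⊗ₜ a)) = θ v ⋆[R, σ] (a ⊗ₜ e) := by
  rw [Rtw_tmul, φtw_φtw θ γ hθγ, h.smulExtend_eq_brzMul_tmul_e]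

theorem brzMul_Rtw_σtw (x y : A ⊗[k] V) :
    brzMul k (Rtw k R θ γ) (σtw k R σ θ γ) (x ⊗ₜ y)
      = φtw k γ (φtw k θ x ⋆[R, σ] φtw k θ y) := by
  induction x using smul_induction_on with
  | smul a x hx => rw [brzMul_smul_left, hx, φtw_smul, brzMul_smul_left, φtw_smul]
  | add x x' hx hx' => simp only [add_tmul, map_add, hx, hx']
  | one_tmul v =>
    induction y using TensorProduct.induction_on with
    | zero => simp
    | add y y' hy hy' => simp only [tmul_add, map_add, hy, hy']
    | tmul b w =>
      rw [one_tmul_brzMul_tmul, smulExtend_σtw, h.φtw_Rtw hθγ, h.brzMul_tmul_e_brzMul,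
        φtw_tmul, φtw_tmul, one_smul]

theorem cros4_σtw : Cros4 k R σ γ (σtw k R σ θ γ) := by
  have hleft : ∀ (v : V) (t : A ⊗[k] V),
      muls2 k A V (TensorProduct.map (mul' k A) (σtw k R σ θ γ)
        (TensorProduct.assoc k (A ⊗[k] A) V V
          (rTensor V (TensorProduct.assoc k A A V).symm.toLinearMap
            (rTensor V (lTensor A γ) (rTensor V R
              ((TensorProduct.assoc k V A V).symm (v ⊗ₜ t)))))))
      = φtw k γ (((1 : A) ⊗ₜ v) ⋆[R, σ] φtw k θ t) := by
    intro v t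
    induction t using TensorProduct.induction_on with
    | zero => simp
    | tmul b x =>
      rw [TensorProduct.assoc_symm_tmul, rTensor_tmul, ← smulExtend_φtw_tmul, smulExtend_σtw,
        φtw_φtw θ γ hθγ, ← h.one_tmul_brzMul_tmul_e, h.brzMul_tmul_e_brzMul, φtw_tmul]
    | add t t' ht ht' => simp only [tmul_add, map_add, ht, ht']
  refine TensorProduct.ext' fun v w => ?_
  simp only [coe_comp, Function.comp_apply, lTensor_tmul, LinearEquiv.coe_coe]
  rw [hleft, hθγ, h.one_tmul_brzMul_one_tmul]
  rfl

end IsBrzezinski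

end Paper

/-- two crossed products `A ⊗_{R,σ} V` and `A ⊗_{R',σ'} V` are equivalent
iff there exist `θ, γ : V → A ⊗ V` satisfying conditions (Rprim)--(cros4). -/
theorem statement5 {k A V : Type u} [Field k] [Ring A] [Algebra k A]
    [AddCommGroup V] [Module k V] (e : V)
    (R R' : V ⊗[k] A →ₗ[k] A ⊗[k] V) (σ σ' : V ⊗[k] V →ₗ[k] A ⊗[k] V)
    (h : IsBrzezinski k e R σ) (h' : IsBrzezinski k e R' σ') :
    (∃ φ : (A ⊗[k] V) ≃ₗ[k] A ⊗[k] V,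
      (∀ x y : A ⊗[k] V, φ (brzMul k R' σ' (x ⊗ₜ y)) = brzMul k R σ (φ x ⊗ₜ φ y)) ∧
      (∀ a : A, φ (a ⊗ₜ e) = a ⊗ₜ e)) ↔
    (∃ θ γ : V →ₗ[k] A ⊗[k] V,
      Cros123 k e θ γ ∧ Cros4 k R σ γ (σtw k R σ θ γ) ∧
      R' = Rtw k R θ γ ∧ σ' = σtw k R σ θ γ) := by
  constructor
  · rintro ⟨φ, hmul, hunit⟩
    have hφ_smul (a : A) (x : A ⊗[k] V) : φ (a • x) = a • φ x := by
      rw [← h'.tmul_e_brzMul, hmul, hunit, h.tmul_e_brzMul]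
    have hφ := φtw_eq_of_map_smul φ.toLinearMap hφ_smul
    have hψ := φtw_eq_of_map_smul φ.symm.toLinearMap fun a x => φ.injective <| by
      simp [hφ_smul]
    set θ := φ.toLinearMap ∘ₗ TensorProduct.mk k A V 1
    set γ := φ.symm.toLinearMap ∘ₗ TensorProduct.mk k A V 1
    have hθγ (v : V) : φtw k θ (γ v) = 1 ⊗ₜ v := by simp [θ, γ, hφ]
    have hγθ (v : V) : φtw k γ (θ v) = 1 ⊗ₜ v := by simp [θ, γ, hψ]
    refine ⟨θ, γ, ⟨hunit 1, ?_, LinearMap.ext hγθ, LinearMap.ext hθγ⟩, h.cros4_σtw hθγ, ?_, ?_⟩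
    · simpa [γ] using congr_arg φ.symm (hunit 1).symm
    · refine TensorProduct.ext' fun v a => ?_
      rw [← h'.one_tmul_brzMul_tmul_e, ← φ.symm_apply_apply (brzMul k R' σ' _), hmul, hunit,
        Rtw_tmul, h.smulExtend_eq_brzMul_tmul_e, hψ]
      rfl
    · refine TensorProduct.ext' fun v w => ?_
      rw [← h'.one_tmul_brzMul_one_tmul, ← φ.symm_apply_apply (brzMul k R' σ' _), hmul,
        σtw_tmul, hψ]
      rfl
  · rintro ⟨θ, γ, ⟨hθe, -, hγθ, hθγ⟩, -, rfl, rfl⟩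
    have hθγ' := LinearMap.congr_fun hθγ
    refine ⟨.ofLinearMap (φtw k θ) (φtw k γ) (LinearMap.ext (φtw_φtw θ γ hθγ'))
      (LinearMap.ext (φtw_φtw γ θ (LinearMap.congr_fun hγθ))), fun x y => ?_, fun a => ?_⟩
    · simp only [LinearEquiv.coe_ofLinearMap]
      rw [h.brzMul_Rtw_σtw hθγ', φtw_φtw θ γ hθγ']
    · simp [hθe, smul_tmul']
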